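/- Let a1, a2 > 0, b > −1, 0 < z < 1, and let L be the generalized-Hahn moment functional L[f] = Σ_{x=0}^{∞} f(x)·(a1)_x (a2)_x z^x / ((b+1)_x x!). Let (P_n)_{n≥0} be a monic orthogonal polynomial sequence for L with recurrence coefficients β_n, γ_n, let A_k(n), −2 ≤ k ≤ 2, be the unique coefficients in the expansion z(x+a1)(x+a2)·P_n(x+1) = Σ_{k=−2}^{2} A_k(n) P_{n+k}(x), and set u_n = β_n + β_{n−1} − n + b + 1, v_n = β_n + β_{n−1} + n − 1 + a1 + a2. Then for all n ≥ 0: A_0(n) = (u_{n+1} − z v_{n+1})γ_{n+1} − (u_n − z v_n)γ_n. -/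

import Mathlib

/-!
With `λ = z (x + a1) (x + a2)` and `φ = x (x + b)`, the weight satisfies the Pearson equation
`φ(x + 1) w(x + 1) = λ(x) w(x)`, and since `φ(0) = 0` summation by parts gives
`L[φ g] = L[λ g(x + 1)]`. The shifted Casoratian `W n = P n(x + 1) P (n - 1) - P (n - 1)(x + 1) P n`
satisfies `W (n + 1) = P n(x + 1) P n + γ n W n` by the three-term recurrence, so
`L[λ W (n + 1)] = A₀(n) h n + γ n L[λ W n]`. On the other hand the Pearson equation rewrites
`L[λ W (n + 1)]` as `L[P (n + 1) (φ P n(x - 1) - λ P n(x + 1))]`, and pairing `P (n + 1)` with a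
polynomial of degree `n + 2` only sees its two leading coefficients; these are computed from the
subleading coefficients `-(β 0 + ⋯ + β (n - 1))` of the `P n`, giving
`L[λ W (n + 1)] = (u (n + 1) - z v (n + 1)) h (n + 1)`. Divide by `h n`, using
`h (n + 1) = γ (n + 1) h n`.
-/

open Polynomial Filter Topology

theorem tendsto_natCast_add_div_natCast_add (a c : ℝ) :
    Tendsto (fun n : ℕ => ((n : ℝ) + a) / (n + c)) atTop (𝓝 1) := by
  have hinv : Tendsto (fun n : ℕ => a / ((n : ℝ) + c)) atTop (𝓝 0) :=
    tendsto_const_nhds.div_atTop (tendsto_atTop_add_const_right _ c tendsto_natCast_atTop_atTop)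
  simpa [add_div] using (tendsto_natCast_div_add_atTop c).add hinv

theorem summable_pow_mul_of_tendsto_ratio {w : ℕ → ℝ} (hw : ∀ x, 0 < w x) {ρ : ℝ} (hρ : ρ < 1)
    (hlim : Tendsto (fun x => w (x + 1) / w x) atTop (𝓝 ρ)) (i : ℕ) :
    Summable fun x : ℕ => (x : ℝ) ^ i * w x := by
  refine summable_of_ratio_test_tendsto_lt_one hρ ?_ ?_
  · filter_upwards [eventually_ge_atTop 1] with x hx
    have : (0 : ℝ) < x := by exact_mod_cast hx
    exact mul_ne_zero (pow_ne_zero _ this.ne') (hw x).ne'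
  · have hpow := (tendsto_natCast_add_div_natCast_add 1 0).pow i
    rw [one_pow] at hpow
    refine (one_mul ρ ▸ hpow.mul hlim).congr' ?_
    filter_upwards [eventually_ge_atTop 1] with x hx
    have : (0 : ℝ) < x := by exact_mod_cast hx
    have := hw x; have := hw (x + 1)
    rw [Real.norm_of_nonneg (by positivity), Real.norm_of_nonneg (by positivity)]
    push_cast
    rw [add_zero, div_pow, div_mul_div_comm]

theorem summable_eval_mul_of_tendsto_ratio {w : ℕ → ℝ} (hw : ∀ x, 0 < w x) {ρ : ℝ} (hρ : ρ < 1)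
    (hlim : Tendsto (fun x => w (x + 1) / w x) atTop (𝓝 ρ)) (q : ℝ[X]) :
    Summable fun x : ℕ => q.eval (x : ℝ) * w x := by
  simp_rw [eval_eq_sum_range, Finset.sum_mul, mul_assoc]
  exact summable_sum fun i _ => (summable_pow_mul_of_tendsto_ratio hw hρ hlim i).mul_left _

noncomputable def seriesFunctional (w : ℕ → ℝ)
    (hw : ∀ q : ℝ[X], Summable fun x : ℕ => q.eval (x : ℝ) * w x) : ℝ[X] →ₗ[ℝ] ℝ where
  toFun q := ∑' x : ℕ, q.eval (x : ℝ) * w x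
  map_add' p q := by simp only [eval_add, add_mul]; exact (hw p).tsum_add (hw q)
  map_smul' c p := by simp only [eval_smul, smul_eq_mul, mul_assoc, tsum_mul_left, RingHom.id_apply]

theorem seriesFunctional_apply (w : ℕ → ℝ)
    (hw : ∀ q : ℝ[X], Summable fun x : ℕ => q.eval (x : ℝ) * w x) (q : ℝ[X]) :
    seriesFunctional w hw q = ∑' x : ℕ, q.eval (x : ℝ) * w x := rfl

theorem seriesFunctional_mul_eq_mul_comp {w : ℕ → ℝ}
    (hw : ∀ q : ℝ[X], Summable fun x : ℕ => q.eval (x : ℝ) * w x) {φ lam : ℝ[X]}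
    (hφ : φ.eval 0 = 0) (hrel : ∀ x : ℕ, φ.eval ((x : ℝ) + 1) * w (x + 1) = lam.eval (x : ℝ) * w x)
    (g : ℝ[X]) :
    seriesFunctional w hw (φ * g) = seriesFunctional w hw (lam * g.comp (X + 1)) := by
  simp only [seriesFunctional_apply]
  rw [(hw _).tsum_eq_zero_add]
  rw [show (φ * g).eval ((0 : ℕ) : ℝ) * w 0 = 0 by simp [hφ], zero_add]
  refine tsum_congr fun x => ?_
  simp only [Nat.cast_add, Nat.cast_one, eval_mul, eval_comp, eval_add, eval_X, eval_one]
  linear_combination g.eval ((x : ℝ) + 1) * hrel x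

noncomputable def hahnWeight (a1 a2 b z : ℝ) (x : ℕ) : ℝ :=
  (ascPochhammer ℝ x).eval a1 * (ascPochhammer ℝ x).eval a2 * z ^ x /
    ((ascPochhammer ℝ x).eval (b + 1) * x.factorial)

section HahnWeight

variable {a1 a2 b z : ℝ}

theorem hahnWeight_pos (ha1 : 0 < a1) (ha2 : 0 < a2) (hb : -1 < b) (hz : 0 < z) (x : ℕ) :
    0 < hahnWeight a1 a2 b z x := by
  have := ascPochhammer_pos x a1 ha1
  have := ascPochhammer_pos x a2 ha2
  have := ascPochhammer_pos x (b + 1) (by linarith)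
  unfold hahnWeight
  positivity

theorem hahnWeight_succ (hb : -1 < b) (x : ℕ) :
    ((x : ℝ) + 1) * ((x : ℝ) + 1 + b) * hahnWeight a1 a2 b z (x + 1) =
      z * ((x : ℝ) + a1) * ((x : ℝ) + a2) * hahnWeight a1 a2 b z x := by
  have := ascPochhammer_pos x (b + 1) (by linarith)
  have : (0 : ℝ) < b + 1 + x := by linarith [(Nat.cast_nonneg x : (0 : ℝ) ≤ x)]
  simp only [hahnWeight, ascPochhammer_succ_eval, Nat.factorial_succ, pow_succ]
  push_cast
  field_simp
  ring

theorem tendsto_hahnWeight_succ_div (ha1 : 0 < a1) (ha2 : 0 < a2) (hb : -1 < b) (hz : 0 < z) :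
    Tendsto (fun x => hahnWeight a1 a2 b z (x + 1) / hahnWeight a1 a2 b z x) atTop (𝓝 z) := by
  have hlim := ((tendsto_natCast_add_div_natCast_add a1 1).mul
    (tendsto_natCast_add_div_natCast_add a2 (1 + b))).const_mul z
  rw [mul_one, mul_one] at hlim
  refine hlim.congr fun x => ?_
  have hwx := hahnWeight_pos ha1 ha2 hb hz x
  have : (0 : ℝ) < (x : ℝ) + (1 + b) := by linarith [(Nat.cast_nonneg x : (0 : ℝ) ≤ x)]
  rw [eq_div_iff hwx.ne']
  field_simp
  linear_combination -(hahnWeight_succ hb x)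

theorem seriesFunctional_hahnWeight_pearson (hb : -1 < b)
    (hsum : ∀ q : ℝ[X], Summable fun x : ℕ => q.eval (x : ℝ) * hahnWeight a1 a2 b z x) (g : ℝ[X]) :
    seriesFunctional (hahnWeight a1 a2 b z) hsum (X * (X + C b) * g) =
      seriesFunctional (hahnWeight a1 a2 b z) hsum
        (C z * (X + C a1) * (X + C a2) * g.comp (X + 1)) :=
  seriesFunctional_mul_eq_mul_comp hsum (by simp) (fun x => by
    simp only [eval_mul, eval_add, eval_X, eval_C]
    linear_combination hahnWeight_succ (a1 := a1) (a2 := a2) (z := z) hb x) g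

end HahnWeight

theorem Polynomial.Monic.nextCoeff_comp_X_add_C {R : Type*} [CommRing R] {p : R[X]}
    (hp : p.Monic) (t : R) : (p.comp (X + C t)).nextCoeff = p.nextCoeff + p.natDegree * t := by
  rw [← taylor_apply]
  obtain hm | ⟨m, hm⟩ : p.natDegree = 0 ∨ ∃ m, p.natDegree = m + 1 :=
    (Nat.eq_zero_or_eq_succ_pred _).imp_right fun h => ⟨_, h⟩
  · simp [nextCoeff, natDegree_taylor, hm]
  rw [nextCoeff_of_natDegree_pos (by rw [natDegree_taylor]; omega),
    nextCoeff_of_natDegree_pos (by omega), natDegree_taylor, hm, Nat.add_sub_cancel, taylor_coeff,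
    eval_eq_sum_range' (n := 2) (by have := natDegree_hasseDeriv_le p m; omega)]
  simp only [Finset.sum_range_succ, Finset.sum_range_zero, hasseDeriv_coeff, zero_add,
    Nat.choose_self, Nat.cast_one, one_mul, pow_zero, mul_one, pow_one]
  rw [add_comm 1 m, Nat.choose_succ_self_right, ← hm, hp.coeff_natDegree]
  ring

theorem Polynomial.degree_sub_C_coeff_mul_lt {R : Type*} [CommRing R] {p r : R[X]} {m : ℕ}
    (hp : p.Monic) (hpm : p.natDegree = m) (hr : r.degree ≤ m) :
    (r - C (r.coeff m) * p).degree < m := by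
  rw [degree_lt_iff_coeff_zero]
  intro k hk
  rw [coeff_sub, coeff_C_mul]
  rcases hk.eq_or_lt with rfl | hk
  · rw [← hpm, hp.coeff_natDegree, hpm, mul_one, sub_self]
  · simp [(degree_le_iff_coeff_zero r m).1 hr k (by exact_mod_cast hk),
      coeff_eq_zero_of_natDegree_lt (show p.natDegree < k by omega)]

section OrthogonalPolynomials

variable {R : Type*} [CommRing R] (L : R[X] →ₗ[R] R) {P : ℕ → R[X]} {h : ℕ → R}

theorem map_C_mul (c : R) (p : R[X]) : L (C c * p) = c * L p := by
  rw [← smul_eq_C_mul, map_smul, smul_eq_mul]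

variable {β γ : ℕ → R}

theorem nextCoeff_succ_eq_sub (hmonic : ∀ n, (P n).Monic) (hdeg : ∀ n, (P n).natDegree = n)
    (hrec : ∀ n, X * P n = P (n + 1) + C (β n) * P n + C (γ n) * P (n - 1)) (hγ0 : γ 0 = 0)
    (n : ℕ) : (P (n + 1)).nextCoeff = (P n).nextCoeff - β n := by
  have hcoeff := congrArg (coeff · n) (hrec n)
  have hlead : (P n).coeff n = 1 := by rw [← (hmonic n).coeff_natDegree, hdeg]
  simp only [coeff_add, coeff_C_mul, hlead] at hcoeff
  rw [nextCoeff_of_natDegree_pos (p := P (n + 1)) (by rw [hdeg]; omega), hdeg, Nat.add_sub_cancel]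
  cases n with
  | zero =>
    simp [nextCoeff, hdeg, hγ0] at hcoeff ⊢
    linear_combination -hcoeff
  | succ k =>
    rw [coeff_X_mul, coeff_eq_zero_of_natDegree_lt (p := P (k + 1 - 1)) (by rw [hdeg]; omega),
      mul_zero, add_zero] at hcoeff
    rw [nextCoeff_of_natDegree_pos (p := P (k + 1)) (by rw [hdeg]; omega), hdeg, Nat.add_sub_cancel]
    linear_combination -hcoeff

theorem h_succ_eq_mul (horth : ∀ n m, L (P n * P m) = if n = m then h n else 0)
    (hrec : ∀ n, X * P n = P (n + 1) + C (β n) * P n + C (γ n) * P (n - 1)) (n : ℕ) :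
    h (n + 1) = γ (n + 1) * h n := by
  have hexpand : ∀ i j, L (P i * (X * P j)) =
      L (P i * P (j + 1)) + β j * L (P i * P j) + γ j * L (P i * P (j - 1)) := fun i j => by
    rw [hrec, mul_add, mul_add, map_add, map_add, mul_left_comm, map_C_mul, mul_left_comm,
      map_C_mul]
  have hsymm := hexpand (n + 1) n
  rw [show P (n + 1) * (X * P n) = P n * (X * P (n + 1)) by ring, hexpand] at hsymm
  simp only [horth, ↓reduceIte, if_neg (show n ≠ n + 1 + 1 by omega),
    if_neg (show n ≠ n + 1 by omega), if_neg (show n + 1 ≠ n by omega),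
    if_neg (show n + 1 ≠ n - 1 by omega), Nat.add_sub_cancel] at hsymm
  linear_combination -hsymm

noncomputable def shiftCasoratian (P : ℕ → R[X]) (n : ℕ) : R[X] :=
  (P n).comp (X + 1) * P (n - 1) - (P (n - 1)).comp (X + 1) * P n

theorem shiftCasoratian_succ
    (hrec : ∀ n, X * P n = P (n + 1) + C (β n) * P n + C (γ n) * P (n - 1)) (n : ℕ) :
    shiftCasoratian P (n + 1) = (P n).comp (X + 1) * P n + C (γ n) * shiftCasoratian P n := by
  have hshift := congrArg (·.comp (X + 1)) (hrec n)
  simp only [mul_comp, add_comp, X_comp, C_comp] at hshift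
  simp only [shiftCasoratian, Nat.add_sub_cancel]
  linear_combination (P n).comp (X + 1) * hrec n - P n * hshift

theorem apply_sum_smul_mul_eq (horth : ∀ n m, L (P n * P m) = if n = m then h n else 0)
    {n : ℕ} {s : Finset ℤ} (hs0 : 0 ∈ s) (hs : ∀ k ∈ s, -(n : ℤ) ≤ k) (c : ℤ → R) :
    L ((∑ k ∈ s, c k • P ((n : ℤ) + k).toNat) * P n) = c 0 * h n := by
  rw [Finset.sum_mul, map_sum, Finset.sum_eq_single_of_mem 0 hs0]
  · simp [horth]
  · intro k hk hk0
    rw [smul_mul_assoc, map_smul, horth, if_neg (by have := hs k hk; omega), smul_zero]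

structure IsMonicOrthogonal (L : R[X] →ₗ[R] R) (P : ℕ → R[X]) (h : ℕ → R) : Prop where
  monic : ∀ n, (P n).Monic
  natDegree_eq : ∀ n, (P n).natDegree = n
  apply_mul : ∀ n m, L (P n * P m) = if n = m then h n else 0

namespace IsMonicOrthogonal

variable {L}

theorem apply_mul_eq_zero_of_degree_lt (hP : IsMonicOrthogonal L P h) {m n : ℕ} (hmn : m ≤ n)
    {r : R[X]} (hr : r.degree < m) : L (P n * r) = 0 := by
  induction m generalizing r with
  | zero => rw [degree_eq_bot.1 (Nat.WithBot.lt_zero_iff.1 hr), mul_zero, map_zero]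
  | succ m ih =>
    have hrest :=
      degree_sub_C_coeff_mul_lt (hP.monic m) (hP.natDegree_eq m) (Order.le_of_lt_succ hr)
    rw [← sub_add_cancel r (C (r.coeff m) * P m), mul_add, map_add, ih (by omega) hrest,
      mul_left_comm, map_C_mul, hP.apply_mul, if_neg (by omega), mul_zero, zero_add]

theorem apply_mul_eq_coeff_mul_of_degree_le (hP : IsMonicOrthogonal L P h) {m : ℕ} {r : R[X]}
    (hr : r.degree ≤ m) : L (P m * r) = r.coeff m * h m := by
  have hrest := degree_sub_C_coeff_mul_lt (hP.monic m) (hP.natDegree_eq m) hr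
  conv_lhs => rw [← sub_add_cancel r (C (r.coeff m) * P m)]
  rw [mul_add, map_add, hP.apply_mul_eq_zero_of_degree_lt le_rfl hrest, mul_left_comm,
    map_C_mul, hP.apply_mul, if_pos rfl, zero_add]

theorem apply_mul_monic_of_natDegree_eq_succ (hP : IsMonicOrthogonal L P h) {m : ℕ} {Q : R[X]}
    (hQ : Q.Monic) (hQm : Q.natDegree = m + 1) :
    L (P m * Q) = (Q.nextCoeff - (P (m + 1)).nextCoeff) * h m := by
  have hrest := degree_sub_C_coeff_mul_lt (hP.monic (m + 1)) (hP.natDegree_eq (m + 1))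
    (hQm ▸ degree_le_natDegree)
  rw [← hQm, hQ.coeff_natDegree, C_1, one_mul, hQm] at hrest
  conv_lhs => rw [← sub_add_cancel Q (P (m + 1))]
  rw [mul_add, map_add, hP.apply_mul_eq_coeff_mul_of_degree_le (Order.le_of_lt_succ hrest),
    hP.apply_mul, if_neg (by omega), add_zero, coeff_sub,
    nextCoeff_of_natDegree_pos (p := Q) (by omega),
    nextCoeff_of_natDegree_pos (p := P (m + 1)) (by rw [hP.natDegree_eq]; omega), hQm,
    hP.natDegree_eq, Nat.add_sub_cancel]

theorem apply_mul_monic_mul_comp_X_add_C (hP : IsMonicOrthogonal L P h) {q : R[X]}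
    (hq : q.Monic) (hq2 : q.natDegree = 2) (t : R) (j : ℕ) :
    L (P (j + 1) * (q * (P j).comp (X + C t))) =
      (q.nextCoeff + (P j).nextCoeff + j * t - (P (j + 2)).nextCoeff) * h (j + 1) := by
  have hcomp := (hP.monic j).comp_X_add_C t
  have hdegcomp : ((P j).comp (X + C t)).natDegree = j := by
    rw [← taylor_apply, natDegree_taylor, hP.natDegree_eq]
  rw [hP.apply_mul_monic_of_natDegree_eq_succ (hq.mul hcomp)
      (by rw [hq.natDegree_mul hcomp, hq2, hdegcomp]; omega),
    hq.nextCoeff_mul hcomp, (hP.monic j).nextCoeff_comp_X_add_C, hP.natDegree_eq, ← add_assoc]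

theorem apply_hahn_mul_shiftCasoratian_succ [Nontrivial R]
    (hP : IsMonicOrthogonal L P h)
    (hrec : ∀ n, X * P n = P (n + 1) + C (β n) * P n + C (γ n) * P (n - 1)) (hγ0 : γ 0 = 0)
    {a1 a2 b z : R}
    (hpearson : ∀ g, L (X * (X + C b) * g) = L (C z * (X + C a1) * (X + C a2) * g.comp (X + 1)))
    (j : ℕ) :
    L (C z * (X + C a1) * (X + C a2) * shiftCasoratian P (j + 1)) =
      (β (j + 1) + β j - j + b - z * (β (j + 1) + β j + j + a1 + a2)) * h (j + 1) := by
  have hφ : (X * (X + C b)).Monic := monic_X.mul (monic_X_add_C b)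
  have hψ : ((X + C a1) * (X + C a2)).Monic := (monic_X_add_C a1).mul (monic_X_add_C a2)
  have hforward : L (C z * (X + C a1) * (X + C a2) * ((P (j + 1)).comp (X + 1) * P j)) =
      L (P (j + 1) * (X * (X + C b) * (P j).comp (X + C (-1)))) := by
    rw [show P (j + 1) * (X * (X + C b) * (P j).comp (X + C (-1))) =
      X * (X + C b) * (P (j + 1) * (P j).comp (X + C (-1))) by ring, hpearson]
    simp [mul_comp, comp_assoc, mul_assoc]
  have hbackward : L (C z * (X + C a1) * (X + C a2) * ((P j).comp (X + 1) * P (j + 1))) =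
      z * L (P (j + 1) * ((X + C a1) * (X + C a2) * (P j).comp (X + C 1))) := by
    rw [← map_C_mul L, C_1]
    congr 1
    ring
  have hσ := nextCoeff_succ_eq_sub hP.monic hP.natDegree_eq hrec hγ0
  rw [shiftCasoratian, Nat.add_sub_cancel, mul_sub, map_sub, hforward, hbackward,
    hP.apply_mul_monic_mul_comp_X_add_C hφ
      (by rw [monic_X.natDegree_mul (monic_X_add_C b), natDegree_X, natDegree_X_add_C]),
    hP.apply_mul_monic_mul_comp_X_add_C hψ
      (by rw [(monic_X_add_C a1).natDegree_mul (monic_X_add_C a2), natDegree_X_add_C,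
        natDegree_X_add_C]),
    monic_X.nextCoeff_mul (monic_X_add_C b), (monic_X_add_C a1).nextCoeff_mul (monic_X_add_C a2),
    show (X : R[X]).nextCoeff = 0 by simp [nextCoeff], nextCoeff_X_add_C, nextCoeff_X_add_C,
    nextCoeff_X_add_C, hσ, hσ]
  ring

end IsMonicOrthogonal

end OrthogonalPolynomials

/-- for the generalized Hahn polynomials of type I,
A₀(n) = Δₙ[(uₙ − z vₙ)γₙ] = (u_{n+1} − z v_{n+1})γ_{n+1} − (uₙ − z vₙ)γₙ. -/
theorem generalized_hahn_A_zero
    (a1 a2 b z : ℝ) (ha1 : 0 < a1) (ha2 : 0 < a2) (hb : -1 < b)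
    (hz0 : 0 < z) (hz1 : z < 1)
    (w : ℕ → ℝ)
    (hw : ∀ x : ℕ, w x =
      (ascPochhammer ℝ x).eval a1 * (ascPochhammer ℝ x).eval a2 * z ^ x /
        ((ascPochhammer ℝ x).eval (b + 1) * x.factorial))
    (P : ℕ → Polynomial ℝ) (h : ℕ → ℝ)
    (hmonic : ∀ n, (P n).Monic) (hdeg : ∀ n, (P n).natDegree = n)
    (hh : ∀ n, h n ≠ 0)
    (horth : ∀ n m : ℕ,
      (∑' x : ℕ, (P n * P m).eval (x : ℝ) * w x) = if n = m then h n else 0)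
    (β γ : ℕ → ℝ) (hγ0 : γ 0 = 0)
    (hrec : ∀ n : ℕ, X * P n = P (n + 1) + C (β n) * P n + C (γ n) * P (n - 1))
    (u v : ℕ → ℝ)
    (hu : ∀ n : ℕ, 1 ≤ n → u n = β n + β (n - 1) - (n : ℝ) + b + 1)
    (hv : ∀ n : ℕ, 1 ≤ n → v n = β n + β (n - 1) + (n : ℝ) - 1 + a1 + a2)
    (A : ℕ → ℤ → ℝ)
    (hA : ∀ n : ℕ,
      C z * (X + C a1) * (X + C a2) * (P n).comp (X + 1) =
        ∑ k ∈ Finset.Icc (max (-(n : ℤ)) (-2)) 2,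
          A n k • P ((n : ℤ) + k).toNat) :
    ∀ n : ℕ, A n 0 =
      (u (n + 1) - z * v (n + 1)) * γ (n + 1) - (u n - z * v n) * γ n := by
  obtain rfl : w = hahnWeight a1 a2 b z := funext hw
  have hsum := summable_eval_mul_of_tendsto_ratio (hahnWeight_pos ha1 ha2 hb hz0) hz1
    (tendsto_hahnWeight_succ_div ha1 ha2 hb hz0)
  set L := seriesFunctional (hahnWeight a1 a2 b z) hsum
  have hP : IsMonicOrthogonal L P h := ⟨hmonic, hdeg, horth⟩
  have hcas : ∀ j, L (C z * (X + C a1) * (X + C a2) * shiftCasoratian P (j + 1)) =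
      (u (j + 1) - z * v (j + 1)) * h (j + 1) := fun j => by
    rw [hP.apply_hahn_mul_shiftCasoratian_succ hrec hγ0
      (seriesFunctional_hahnWeight_pearson hb hsum), hu (j + 1) (by omega), hv (j + 1) (by omega),
      Nat.add_sub_cancel]
    push_cast
    ring
  intro n
  have hA0 : L (C z * (X + C a1) * (X + C a2) * (P n).comp (X + 1) * P n) = A n 0 * h n := by
    rw [hA n]
    exact apply_sum_smul_mul_eq L hP.apply_mul (by simp) (fun k hk => by simp at hk; omega) _
  have hstep : L (C z * (X + C a1) * (X + C a2) * shiftCasoratian P (n + 1)) =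
      A n 0 * h n + γ n * L (C z * (X + C a1) * (X + C a2) * shiftCasoratian P n) := by
    rw [shiftCasoratian_succ hrec, mul_add, map_add, ← mul_assoc, hA0, mul_left_comm, map_C_mul]
  have hprev : γ n * L (C z * (X + C a1) * (X + C a2) * shiftCasoratian P n) =
      (u n - z * v n) * γ n * h n := by
    cases n with
    | zero => simp [hγ0]
    | succ m => rw [hcas m]; ring
  rw [hcas, h_succ_eq_mul L hP.apply_mul hrec, hprev] at hstep
  exact mul_right_cancel₀ (hh n) (by linear_combination -hstep)
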